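/- Let d ≥ 2 be an integer and set t = √(log d / (2d)). Then σ_t ≥ t / 140. -/

import Mathlib

open Real MeasureTheory Metric Set Pointwise
open scoped ENNReal NNReal

set_option maxHeartbeats 1000000


lemma gautschi (w : ℝ) (hw : 0 < w) :
    Real.Gamma (w + 1/2) * Real.sqrt w ≤ Real.Gamma (w + 1) := by
  have hΓw : 0 < Real.Gamma w := Real.Gamma_pos_of_pos hw
  have hΓw1 : 0 < Real.Gamma (w + 1) := Real.Gamma_pos_of_pos (by linarith)
  have hconv := Real.convexOn_log_Gamma
  have h := hconv.2 (Set.mem_Ioi.2 hw) (Set.mem_Ioi.2 (show (0:ℝ) < w + 1 by linarith))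
    (by norm_num : (0:ℝ) ≤ 1/2) (by norm_num : (0:ℝ) ≤ 1/2) (by norm_num)
  simp only [smul_eq_mul, Function.comp_apply] at h
  have hmid : (1/2 : ℝ) * w + (1/2) * (w + 1) = w + 1/2 := by ring
  rw [hmid] at h
  -- h : log (Gamma (w+1/2)) ≤ 1/2 * log (Gamma w) + 1/2 * log (Gamma (w+1))
  have hadd : Real.Gamma (w + 1) = w * Real.Gamma w := Real.Gamma_add_one (ne_of_gt hw)
  have hlog1 : Real.log (Real.Gamma (w+1)) = Real.log w + Real.log (Real.Gamma w) := by
    rw [hadd, Real.log_mul (ne_of_gt hw) (ne_of_gt hΓw)]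
  have h2 : Real.log (Real.Gamma (w + 1/2)) ≤ Real.log (Real.Gamma w) + (1/2) * Real.log w := by
    rw [hlog1] at h; linarith
  have hΓhalf : 0 < Real.Gamma (w + 1/2) := Real.Gamma_pos_of_pos (by linarith)
  have hsq : Real.exp ((1/2) * Real.log w) = Real.sqrt w := by
    rw [show (1/2 : ℝ) * Real.log w = Real.log (Real.sqrt w) by rw [Real.log_sqrt hw.le]; ring, Real.exp_log (Real.sqrt_pos.2 hw)]
  have h3 : Real.Gamma (w + 1/2) ≤ Real.Gamma w * Real.sqrt w := by
    calc Real.Gamma (w + 1/2) = Real.exp (Real.log (Real.Gamma (w + 1/2))) :=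
          (Real.exp_log hΓhalf).symm
      _ ≤ Real.exp (Real.log (Real.Gamma w) + (1/2) * Real.log w) := Real.exp_le_exp.2 h2
      _ = Real.Gamma w * Real.sqrt w := by rw [Real.exp_add, Real.exp_log hΓw, hsq]
  calc Real.Gamma (w + 1/2) * Real.sqrt w ≤ Real.Gamma w * Real.sqrt w * Real.sqrt w :=
        mul_le_mul_of_nonneg_right h3 (Real.sqrt_nonneg w)
    _ = Real.Gamma w * w := by rw [mul_assoc, Real.mul_self_sqrt hw.le]
    _ = Real.Gamma (w + 1) := by rw [hadd, mul_comm]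


lemma numeric_ineq : Real.sqrt π / 140 ≤ (Real.sqrt 2 - 1) / (Real.exp 1 * Real.sqrt 2) := by
  have h2u : Real.sqrt 2 ≤ 1.5 := by
    nlinarith [Real.sq_sqrt (by norm_num : (0:ℝ) ≤ 2), Real.sqrt_nonneg 2]
  have h2l : (1.4:ℝ) ≤ Real.sqrt 2 := by
    nlinarith [Real.sq_sqrt (by norm_num : (0:ℝ) ≤ 2), Real.sqrt_nonneg 2]
  have hpi : Real.sqrt π ≤ 1.8 := by
    nlinarith [Real.sq_sqrt Real.pi_pos.le, Real.sqrt_nonneg π, Real.pi_lt_d2]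
  have hel : (1:ℝ) ≤ Real.exp 1 := by linarith [Real.add_one_le_exp (1:ℝ), Real.exp_pos 1]
  have heu : Real.exp 1 ≤ 2.72 := by linarith [Real.exp_one_lt_d9]
  rw [div_le_div_iff₀ (by norm_num) (by positivity)]
  have hs2 : (0:ℝ) ≤ Real.sqrt 2 := Real.sqrt_nonneg 2
  have he : (0:ℝ) ≤ Real.exp 1 := (Real.exp_pos 1).le
  have hpn : (0:ℝ) ≤ Real.sqrt π := Real.sqrt_nonneg π
  have h1 : Real.exp 1 * Real.sqrt 2 ≤ 2.72 * 1.5 :=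
    mul_le_mul heu h2u hs2 (by norm_num)
  have h2 : Real.sqrt π * (Real.exp 1 * Real.sqrt 2) ≤ 1.8 * (2.72 * 1.5) :=
    mul_le_mul hpi h1 (by positivity) (by norm_num)
  nlinarith

lemma sqrt_two_gt_one : (1:ℝ) < Real.sqrt 2 := by
  nlinarith [Real.sq_sqrt (by norm_num : (0:ℝ) ≤ 2), Real.sqrt_nonneg 2]

/-- Abstract algebraic assembly. -/
lemma key_abstract (n : ℕ) (D t ρ Gn Gd : ℝ)
    (hD2 : 2 ≤ D) (ht0 : 0 < t) (hρ0 : 0 ≤ ρ)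
    (hρn : 1 / (Real.exp 1 * Real.sqrt D) ≤ ρ ^ n)
    (hgaut : Gn * Real.sqrt (D/2) ≤ Gd) (hGn : 0 < Gn) (hGd : 0 < Gd) :
    t / 140 * (Real.sqrt π ^ (n+1) / Gd) ≤
      (Real.sqrt 2 * t - t) * ρ ^ n * (Real.sqrt π ^ n / Gn) := by
  have hD0 : (0:ℝ) < D := by linarith
  have hsD : 0 < Real.sqrt D := Real.sqrt_pos.2 hD0
  have hs2 : (1:ℝ) < Real.sqrt 2 := sqrt_two_gt_one
  have hπn : (0:ℝ) < Real.sqrt π ^ n := by positivity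
  rw [show t / 140 * (Real.sqrt π ^ (n+1) / Gd) = (t / 140 * Real.sqrt π ^ (n+1)) / Gd by ring,
    show (Real.sqrt 2 * t - t) * ρ ^ n * (Real.sqrt π ^ n / Gn)
      = ((Real.sqrt 2 * t - t) * ρ ^ n * Real.sqrt π ^ n) / Gn by ring,
    div_le_div_iff₀ hGd hGn]
  have hsD2 : Real.sqrt (D/2) = Real.sqrt D / Real.sqrt 2 := by
    rw [Real.sqrt_div hD0.le]
  have key : Real.sqrt π / 140 ≤ (Real.sqrt 2 - 1) / (Real.exp 1 * Real.sqrt 2) :=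
    numeric_ineq
  have hsDne : Real.sqrt D ≠ 0 := ne_of_gt hsD
  have hs2ne : Real.sqrt 2 ≠ 0 := by positivity
  have hene : Real.exp 1 ≠ 0 := Real.exp_ne_zero 1
  calc t / 140 * Real.sqrt π ^ (n+1) * Gn
      = (t * Real.sqrt π ^ n * Gn) * (Real.sqrt π / 140) := by rw [pow_succ]; ring
    _ ≤ (t * Real.sqrt π ^ n * Gn) *
          ((Real.sqrt 2 - 1) / (Real.exp 1 * Real.sqrt 2)) :=
        mul_le_mul_of_nonneg_left key (by positivity)
    _ = ((Real.sqrt 2 - 1) * t) * (1 / (Real.exp 1 * Real.sqrt D)) * Real.sqrt π ^ n *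
          (Gn * Real.sqrt (D/2)) := by
        rw [hsD2]
        field_simp
    _ ≤ ((Real.sqrt 2 - 1) * t) * (1 / (Real.exp 1 * Real.sqrt D)) * Real.sqrt π ^ n *
          Gd := by
        refine mul_le_mul_of_nonneg_left hgaut ?_
        have hA : (0:ℝ) ≤ (Real.sqrt 2 - 1) * t := by nlinarith
        exact mul_nonneg (mul_nonneg hA (by positivity)) hπn.le
    _ ≤ ((Real.sqrt 2 - 1) * t) * (ρ ^ n) * Real.sqrt π ^ n * Gd := by
        have hA : (0:ℝ) ≤ (Real.sqrt 2 - 1) * t := by nlinarith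
        have h1 : ((Real.sqrt 2 - 1) * t) * (1 / (Real.exp 1 * Real.sqrt D)) ≤
            ((Real.sqrt 2 - 1) * t) * (ρ ^ n) := mul_le_mul_of_nonneg_left hρn hA
        exact mul_le_mul_of_nonneg_right (mul_le_mul_of_nonneg_right h1 hπn.le) hGd.le
    _ = (Real.sqrt 2 * t - t) * ρ ^ n * Real.sqrt π ^ n * Gd := by ring

lemma log_sq_le (D : ℝ) (hD1 : 1 ≤ D) : Real.log D ^ 2 ≤ D := by
  have hD0 : (0:ℝ) < D := by linarith
  obtain ⟨L, hL⟩ : ∃ L, L = Real.log D := ⟨_, rfl⟩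
  rw [← hL]
  have hL0 : 0 ≤ L := hL ▸ Real.log_nonneg hD1
  obtain ⟨y, hy⟩ : ∃ y, y = Real.exp (L / 4) := ⟨_, rfl⟩
  have hy1 : L / 4 + 1 ≤ y := hy ▸ Real.add_one_le_exp (L/4)
  have hy4 : y ^ 4 = D := by
    rw [hy, ← Real.exp_nat_mul, show ((4:ℕ):ℝ) * (L/4) = L by push_cast; ring,
      hL, Real.exp_log hD0]
  have hyge : (1:ℝ) ≤ y := by linarith
  nlinarith [sq_nonneg (y - 2), sq_nonneg (y*y - 2*y), sq_nonneg y]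

lemma log_le_half (D : ℝ) (hD0 : 0 < D) : Real.log D ≤ D / 2 := by
  have hsD : 0 < Real.sqrt D := Real.sqrt_pos.2 hD0
  have hsDsq : Real.sqrt D ^ 2 = D := Real.sq_sqrt hD0.le
  have h := Real.log_le_sub_one_of_pos hsD
  rw [Real.log_sqrt hD0.le] at h
  nlinarith [sq_nonneg (Real.sqrt D - 2)]

lemma rho_bound (n : ℕ) (D : ℝ) (hD2 : 2 ≤ D) (hnD : (n:ℝ) ≤ D) :
    1 / (Real.exp 1 * Real.sqrt D) ≤ Real.sqrt (1 - Real.log D / D) ^ n := by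
  have hD0 : (0:ℝ) < D := by linarith
  have hsD : 0 < Real.sqrt D := Real.sqrt_pos.2 hD0
  have hlsD : Real.log (Real.sqrt D) = Real.log D / 2 := Real.log_sqrt hD0.le
  have hL0 : 0 < Real.log D := Real.log_pos (by linarith)
  have hL2 : Real.log D ^ 2 ≤ D := log_sq_le D (by linarith)
  have hLD2 : Real.log D ≤ D / 2 := log_le_half D hD0
  obtain ⟨L, hL⟩ : ∃ L, Real.log D = L := ⟨_, rfl⟩
  rw [hL] at hL0 hL2 hLD2 hlsD ⊢
  obtain ⟨x, hx⟩ : ∃ x, L / D = x := ⟨_, rfl⟩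
  rw [hx]
  have hDx : D * x = L := by rw [← hx]; field_simp
  have hDx2 : D * x^2 = L^2 / D := by rw [← hx]; field_simp
  have hx0 : 0 < x := by rw [← hx]; exact div_pos hL0 hD0
  have hx2 : x ≤ 1/2 := by rw [← hx, div_le_iff₀ hD0]; linarith
  have h1x : 0 < 1 - x := by linarith
  have hlogx : -x - 2*x^2 ≤ Real.log (1 - x) := by
    have h := Real.log_le_sub_one_of_pos (inv_pos.2 h1x)
    rw [Real.log_inv] at h
    have hz : (1-x)⁻¹ ≤ 1 + x + 2*x^2 := by
      rw [inv_eq_one_div, div_le_iff₀ h1x]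
      nlinarith [sq_nonneg x]
    linarith
  have hρ0 : 0 < Real.sqrt (1 - x) := Real.sqrt_pos.2 h1x
  have hlogρ : Real.log (Real.sqrt (1-x) ^ n) = (n : ℝ) * (Real.log (1-x) / 2) := by
    rw [Real.log_pow, Real.log_sqrt h1x.le]
  have hneg : Real.log (1-x) ≤ 0 := Real.log_nonpos (by linarith) (by linarith)
  have hb1 : (n:ℝ) * (Real.log (1-x) / 2) ≥ D * (Real.log (1-x) / 2) := by nlinarith
  have hb2 : D * (Real.log (1-x) / 2) ≥ -(L/2) - 1 := by
    have h1 : D * (Real.log (1-x) / 2) ≥ D * ((-x - 2*x^2) / 2) := by nlinarith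
    have hrw : D * ((-x - 2*x^2) / 2) = -(L/2) - L^2 / D := by
      rw [show L^2/D = D * x^2 from hDx2.symm]; nlinarith [hDx]
    have hL2D : L^2 / D ≤ 1 := by rw [div_le_one hD0]; exact hL2
    linarith
  have hrhs : Real.log (1 / (Real.exp 1 * Real.sqrt D)) = -(L/2) - 1 := by
    rw [one_div, Real.log_inv, Real.log_mul (Real.exp_ne_zero 1) (ne_of_gt hsD),
      Real.log_exp, hlsD]
    ring
  have hlog_le : Real.log (1 / (Real.exp 1 * Real.sqrt D)) ≤
      Real.log (Real.sqrt (1-x) ^ n) := by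
    rw [hrhs, hlogρ]; linarith
  have hpos : (0:ℝ) < 1 / (Real.exp 1 * Real.sqrt D) := by positivity
  calc 1 / (Real.exp 1 * Real.sqrt D)
      = Real.exp (Real.log (1 / (Real.exp 1 * Real.sqrt D))) := (Real.exp_log hpos).symm
    _ ≤ Real.exp (Real.log (Real.sqrt (1-x) ^ n)) := Real.exp_le_exp.2 hlog_le
    _ = Real.sqrt (1-x) ^ n := Real.exp_log (by positivity)

lemma key_real (n : ℕ) (D : ℝ) (hD2 : 2 ≤ D) (hN : (n:ℝ) = D - 1) :
    Real.sqrt (Real.log D / (2 * D)) / 140 *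
        (Real.sqrt π ^ (n+1) / Real.Gamma (D / 2 + 1)) ≤
      (Real.sqrt (Real.log D / D) - Real.sqrt (Real.log D / (2 * D))) *
        Real.sqrt (1 - Real.log D / D) ^ n *
        (Real.sqrt π ^ n / Real.Gamma ((n : ℝ) / 2 + 1)) := by
  have hD0 : (0:ℝ) < D := by linarith
  have hL0 : 0 < Real.log D := Real.log_pos (by linarith)
  have ht0 : 0 < Real.sqrt (Real.log D / (2 * D)) :=
    Real.sqrt_pos.2 (div_pos hL0 (by linarith))
  have hst : Real.sqrt (Real.log D / D) =
      Real.sqrt 2 * Real.sqrt (Real.log D / (2 * D)) := by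
    rw [← Real.sqrt_mul (by norm_num : (0:ℝ) ≤ 2)]
    congr 1
    field_simp
  have hgaut : Real.Gamma ((n:ℝ)/2 + 1) * Real.sqrt (D/2) ≤ Real.Gamma (D/2 + 1) := by
    have h := gautschi (D/2) (by linarith)
    have heq : D/2 + 1/2 = (n:ℝ)/2 + 1 := by rw [hN]; ring
    rwa [heq] at h
  have hGd : 0 < Real.Gamma (D/2 + 1) := Real.Gamma_pos_of_pos (by linarith)
  have hGn : 0 < Real.Gamma ((n:ℝ)/2 + 1) := Real.Gamma_pos_of_pos (by positivity)
  rw [hst]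
  exact key_abstract n D _ _ _ _ hD2 ht0 (Real.sqrt_nonneg _)
    (rho_bound n D hD2 (by rw [hN]; linarith)) hgaut hGn hGd

/-- The normalized surface measure of the spherical cap
`C_t(u) = {w ∈ S^{d-1} : ⟨w, u⟩ ≥ t}` on the Euclidean unit sphere in `ℝ^d`. -/
noncomputable def capSigma (d : ℕ) (t : ℝ) (u : EuclideanSpace ℝ (Fin d)) : ℝ :=
  (((MeasureTheory.volume : MeasureTheory.Measure (EuclideanSpace ℝ (Fin d))).toSphere
      {w : Metric.sphere (0 : EuclideanSpace ℝ (Fin d)) 1 |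
        t ≤ (inner ℝ (w : EuclideanSpace ℝ (Fin d)) u : ℝ)}) /
    ((MeasureTheory.volume : MeasureTheory.Measure (EuclideanSpace ℝ (Fin d))).toSphere
      Set.univ)).toReal

/-- For every `d ≥ 2`, with `t = √(log d / (2d))`, the normalized measure of the
spherical cap of height `1 - t` satisfies `σ_t ≥ t / 140`. -/
theorem capSigma_ge
    (d : ℕ) (hd : 2 ≤ d) :
    Real.sqrt (Real.log d / (2 * d)) / 140 ≤
      capSigma d (Real.sqrt (Real.log d / (2 * d)))
        (EuclideanSpace.single (⟨0, by omega⟩ : Fin d) 1) := by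
  obtain ⟨m, rfl⟩ : ∃ m, d = m + 2 := ⟨d - 2, by omega⟩
  set D : ℝ := ((m + 2 : ℕ) : ℝ) with hDdef
  have hD2 : (2:ℝ) ≤ D := by
    rw [hDdef]; push_cast; linarith [Nat.cast_nonneg (α := ℝ) m]
  have hD0 : (0:ℝ) < D := by linarith
  have hL0 : 0 < Real.log D := Real.log_pos (by linarith)
  have hLD : Real.log D / D ≤ 1/2 := by
    rw [div_le_iff₀ hD0]; have := log_le_half D hD0; linarith
  have hLD0 : 0 < Real.log D / D := div_pos hL0 hD0
  set t : ℝ := Real.sqrt (Real.log D / (2 * D)) with htdef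
  set s : ℝ := Real.sqrt (Real.log D / D) with hsdef
  set ρ : ℝ := Real.sqrt (1 - Real.log D / D) with hρdef
  have ht0 : 0 < t := Real.sqrt_pos.2 (div_pos hL0 (by linarith))
  have hts : t < s := by
    apply Real.sqrt_lt_sqrt (by positivity)
    rw [div_lt_div_iff₀ (by linarith) hD0]
    nlinarith
  have hssq : s ^ 2 = Real.log D / D := Real.sq_sqrt hLD0.le
  have hρsq : ρ ^ 2 = 1 - Real.log D / D := Real.sq_sqrt (by linarith)
  set i0 : Fin (m+2) := ⟨0, by omega⟩ with hi0
  set u : EuclideanSpace ℝ (Fin (m+2)) := EuclideanSpace.single i0 (1:ℝ) with hudef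
  have hinner : ∀ x : EuclideanSpace ℝ (Fin (m+2)), (inner ℝ x u : ℝ) = x i0 := by
    intro x
    simp [hudef, EuclideanSpace.inner_single_right]
  have hnormu : ‖u‖ = 1 := by rw [hudef]; simp
  set cap : Set (Metric.sphere (0 : EuclideanSpace ℝ (Fin (m+2))) 1) :=
    {w : Metric.sphere (0 : EuclideanSpace ℝ (Fin (m+2))) 1 | t ≤ (inner ℝ (w : EuclideanSpace ℝ (Fin (m+2))) u : ℝ)} with hcapdef
  have hcap_meas : MeasurableSet cap := by
    refine (isClosed_le continuous_const ?_).measurableSet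
    exact Continuous.inner
      (continuous_subtype_val :
        Continuous ((↑) : Metric.sphere (0 : EuclideanSpace ℝ (Fin (m+2))) 1 →
          EuclideanSpace ℝ (Fin (m+2)))) continuous_const
  -- the solid region A
  set A : Set (EuclideanSpace ℝ (Fin (m+2))) := {x : EuclideanSpace ℝ (Fin (m+2)) | ‖x‖ < 1 ∧ t ≤ (inner ℝ x u : ℝ)} with hAdef
  have hA_sub : A ⊆ Ioo (0:ℝ) 1 • (Subtype.val '' cap) := by
    rintro x ⟨hx1, hxt⟩
    have hxle : (inner ℝ x u : ℝ) ≤ ‖x‖ := by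
      calc (inner ℝ x u : ℝ) ≤ ‖x‖ * ‖u‖ := real_inner_le_norm x u
        _ = ‖x‖ := by rw [hnormu, mul_one]
    have hxn : 0 < ‖x‖ := lt_of_lt_of_le ht0 (le_trans hxt hxle)
    have hxne : x ≠ 0 := by intro h; rw [h] at hxn; simp at hxn
    have hy : ‖(‖x‖⁻¹ • x : EuclideanSpace ℝ (Fin (m+2)))‖ = 1 := by
      rw [norm_smul, norm_inv, norm_norm, inv_mul_cancel₀ (ne_of_gt hxn)]
    have hcapmem : t ≤ (inner ℝ ((‖x‖⁻¹ • x : EuclideanSpace ℝ (Fin (m+2)))) u : ℝ) := by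
      rw [real_inner_smul_left]
      have hinv : 1 ≤ ‖x‖⁻¹ := by
        rw [le_inv_comm₀ (by norm_num) hxn]
        simpa using hx1.le
      nlinarith [hxt, ht0]
    exact Set.mem_smul.2 ⟨‖x‖, ⟨hxn, hx1⟩, (‖x‖⁻¹ • x : EuclideanSpace ℝ (Fin (m+2))),
      ⟨⟨(‖x‖⁻¹ • x : EuclideanSpace ℝ (Fin (m+2))), mem_sphere_zero_iff_norm.2 hy⟩,
        hcapmem, rfl⟩, smul_inv_smul₀ (ne_of_gt hxn) x⟩
  -- measure-preserving chain
  have hφ1 := EuclideanSpace.volume_preserving_symm_measurableEquiv_toLp (Fin (m+2))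
  have hψ := MeasureTheory.volume_preserving_piFinSuccAbove (fun _ : Fin (m+2) => ℝ) i0
  have hφ2 : MeasurePreserving
      (Prod.map (id : ℝ → ℝ) (⇑(MeasurableEquiv.toLp 2 (Fin (m+1) → ℝ))))
      volume volume := by
    rw [Measure.volume_eq_prod, Measure.volume_eq_prod]
    exact (MeasurePreserving.id volume).prod
      (EuclideanSpace.volume_preserving_symm_measurableEquiv_toLp (Fin (m+1))).symm
  set Φ : EuclideanSpace ℝ (Fin (m+2)) → ℝ × EuclideanSpace ℝ (Fin (m+1)) :=
    (Prod.map (id : ℝ → ℝ) (⇑(MeasurableEquiv.toLp 2 (Fin (m+1) → ℝ)))) ∘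
      (⇑(MeasurableEquiv.piFinSuccAbove (fun _ : Fin (m+2) => ℝ) i0)) ∘
      (⇑(MeasurableEquiv.toLp 2 (Fin (m+2) → ℝ)).symm) with hΦdef
  have hΦmp : MeasurePreserving Φ volume volume := hφ2.comp (hψ.comp hφ1)
  set Cyl : Set (ℝ × EuclideanSpace ℝ (Fin (m+1))) := Ioo t s ×ˢ Metric.ball 0 ρ
    with hCyldef
  have hCyl_meas : MeasurableSet Cyl := measurableSet_Ioo.prod measurableSet_ball
  have hΦ_apply : ∀ x : EuclideanSpace ℝ (Fin (m+2)), Φ x = (x i0, WithLp.toLp 2 (fun j => x (i0.succAbove j))) := by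
    intro x
    rfl
  have hpre_sub : Φ ⁻¹' Cyl ⊆ A := by
    intro x hx
    rw [Set.mem_preimage, hCyldef, Set.mem_prod] at hx
    obtain ⟨hx1, hxball⟩ := hx
    rw [mem_ball_zero_iff] at hxball
    rw [Set.mem_Ioo] at hx1
    have h1 : (Φ x).1 = x i0 := by rw [hΦ_apply]
    have h2 : ∀ j, (Φ x).2 j = x (i0.succAbove j) := by intro j; rw [hΦ_apply]
    rw [h1] at hx1
    have hynorm : ‖(Φ x).2‖ ^ 2 = ∑ j, x (i0.succAbove j) ^ 2 := by
      rw [EuclideanSpace.norm_eq, Real.sq_sqrt (by positivity)]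
      simp only [Real.norm_eq_abs, sq_abs]
      exact Finset.sum_congr rfl fun j _ => by rw [h2]
    have hxnorm : ‖x‖ ^ 2 = x i0 ^ 2 + ∑ j, x (i0.succAbove j) ^ 2 := by
      rw [EuclideanSpace.norm_eq, Real.sq_sqrt (by positivity)]
      simp only [Real.norm_eq_abs, sq_abs]
      exact Fin.sum_univ_succAbove (fun i => x i ^ 2) i0
    constructor
    · show ‖x‖ < 1
      have h1' : x i0 ^ 2 < s ^ 2 := by nlinarith [ht0.le, hx1.1, hx1.2, hts]
      have hρ0 : (0:ℝ) < ρ := Real.sqrt_pos.2 (by linarith)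
      have h2' : (∑ j, x (i0.succAbove j) ^ 2) < ρ ^ 2 := by
        rw [← hynorm]
        nlinarith [norm_nonneg (Φ x).2]
      have h3 : ‖x‖ ^ 2 < 1 := by
        rw [hxnorm]
        nlinarith [hssq, hρsq]
      nlinarith [norm_nonneg x]
    · show t ≤ (inner ℝ x u : ℝ)
      rw [hinner]; exact hx1.1.le
  -- volume computations
  have hCyl_vol : volume Cyl = ENNReal.ofReal (s - t) *
      (ENNReal.ofReal ρ ^ (m+1) *
        ENNReal.ofReal (Real.sqrt π ^ (m+1) / Real.Gamma ((m+1 : ℕ) / 2 + 1))) := by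
    rw [hCyldef, Measure.volume_eq_prod, Measure.prod_prod, Real.volume_Ioo,
      EuclideanSpace.volume_ball]
    simp [Fintype.card_fin]
  -- transfer via measure preservation
  have hpre_vol : volume (Φ ⁻¹' Cyl) = volume Cyl :=
    hΦmp.measure_preimage hCyl_meas.nullMeasurableSet
  have hA_vol : volume Cyl ≤ volume A := by
    rw [← hpre_vol]; exact measure_mono hpre_sub
  have hfr : Module.finrank ℝ (EuclideanSpace ℝ (Fin (m+2))) = m + 2 :=
    finrank_euclideanSpace_fin
  have hcap_lb : ((m+2 : ℕ) : ℝ≥0∞) * volume Cyl ≤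
      (volume : Measure (EuclideanSpace ℝ (Fin (m+2)))).toSphere cap := by
    rw [Measure.toSphere_apply' _ hcap_meas, hfr]
    exact mul_le_mul_right (le_trans hA_vol (le_trans (measure_mono hA_sub) le_rfl)) _
  have huniv : (volume : Measure (EuclideanSpace ℝ (Fin (m+2)))).toSphere Set.univ =
      ((m+2 : ℕ) : ℝ≥0∞) * volume (ball (0 : EuclideanSpace ℝ (Fin (m+2))) 1) := by
    rw [Measure.toSphere_apply_univ, hfr]
  have hball : volume (ball (0 : EuclideanSpace ℝ (Fin (m+2))) 1) =
      ENNReal.ofReal (Real.sqrt π ^ (m+2) / Real.Gamma ((m+2 : ℕ) / 2 + 1)) := by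
    rw [EuclideanSpace.volume_ball]
    simp [Fintype.card_fin]
  have hGd : 0 < Real.Gamma (((m+2 : ℕ) : ℝ) / 2 + 1) := Real.Gamma_pos_of_pos (by positivity)
  have hGn : 0 < Real.Gamma (((m+1 : ℕ) : ℝ) / 2 + 1) := Real.Gamma_pos_of_pos (by positivity)
  have hballpos : 0 < volume (ball (0 : EuclideanSpace ℝ (Fin (m+2))) 1) :=
    measure_ball_pos _ _ one_pos
  have hballne : volume (ball (0 : EuclideanSpace ℝ (Fin (m+2))) 1) ≠ ⊤ :=
    measure_ball_lt_top.ne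
  -- unfold capSigma
  show t / 140 ≤
    (((volume : Measure (EuclideanSpace ℝ (Fin (m+2)))).toSphere cap) /
      ((volume : Measure (EuclideanSpace ℝ (Fin (m+2)))).toSphere Set.univ)).toReal
  rw [ENNReal.toReal_div]
  have hDm_ne : (volume : Measure (EuclideanSpace ℝ (Fin (m+2)))).toSphere Set.univ ≠ ⊤ :=
    measure_ne_top _ _
  have hDm_pos : 0 < ((volume : Measure (EuclideanSpace ℝ (Fin (m+2)))).toSphere
      Set.univ).toReal := by
    apply ENNReal.toReal_pos _ hDm_ne
    rw [huniv]
    exact mul_ne_zero (by simp) (ne_of_gt hballpos)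
  rw [le_div_iff₀ hDm_pos]
  have hN_ne : (volume : Measure (EuclideanSpace ℝ (Fin (m+2)))).toSphere cap ≠ ⊤ :=
    measure_ne_top _ _
  have hNlow : ((((m+2 : ℕ) : ℝ≥0∞)) * volume Cyl).toReal ≤
      (((volume : Measure (EuclideanSpace ℝ (Fin (m+2)))).toSphere cap)).toReal :=
    ENNReal.toReal_mono hN_ne hcap_lb
  refine le_trans ?_ hNlow
  -- now a purely real computation
  have hconst_n : (0:ℝ) ≤ Real.sqrt π ^ (m+1) / Real.Gamma (((m+1:ℕ):ℝ) / 2 + 1) :=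
    div_nonneg (by positivity) hGn.le
  have hconst_d : (0:ℝ) ≤ Real.sqrt π ^ (m+2) / Real.Gamma (((m+2:ℕ):ℝ) / 2 + 1) :=
    div_nonneg (by positivity) hGd.le
  have hCT : ((((m+2 : ℕ) : ℝ≥0∞)) * volume Cyl).toReal =
      ((m+2 : ℕ) : ℝ) * ((s - t) * (ρ ^ (m+1) *
        (Real.sqrt π ^ (m+1) / Real.Gamma (((m+1:ℕ):ℝ) / 2 + 1)))) := by
    rw [hCyl_vol, ENNReal.toReal_mul, ENNReal.toReal_mul, ENNReal.toReal_mul,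
      ENNReal.toReal_pow, ENNReal.toReal_natCast, ENNReal.toReal_ofReal (by linarith [hts]),
      ENNReal.toReal_ofReal (Real.sqrt_nonneg _), ENNReal.toReal_ofReal hconst_n]
  have hDT : (((volume : Measure (EuclideanSpace ℝ (Fin (m+2)))).toSphere
      Set.univ)).toReal = ((m+2 : ℕ) : ℝ) *
        (Real.sqrt π ^ (m+2) / Real.Gamma (((m+2:ℕ):ℝ) / 2 + 1)) := by
    rw [huniv, hball, ENNReal.toReal_mul, ENNReal.toReal_natCast,
      ENNReal.toReal_ofReal hconst_d]
  rw [hCT, hDT]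
  have hkey := key_real (m+1) D hD2 (by rw [hDdef]; push_cast; ring)
  have hm2 : ((m+2 : ℕ) : ℝ) = D := by rw [hDdef]
  have hcast : (0:ℝ) ≤ ((m+2 : ℕ) : ℝ) := by positivity
  calc t / 140 * (((m+2 : ℕ) : ℝ) *
        (Real.sqrt π ^ (m+2) / Real.Gamma (((m+2:ℕ):ℝ) / 2 + 1)))
      = ((m+2 : ℕ) : ℝ) * (t / 140 *
        (Real.sqrt π ^ (m+1+1) / Real.Gamma (D / 2 + 1))) := by
        rw [hm2]; ring_nf
    _ ≤ ((m+2 : ℕ) : ℝ) * ((s - t) * ρ ^ (m+1) *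
        (Real.sqrt π ^ (m+1) / Real.Gamma (((m+1:ℕ):ℝ) / 2 + 1))) := by
        apply mul_le_mul_of_nonneg_left _ hcast
        exact hkey
    _ = ((m+2 : ℕ) : ℝ) * ((s - t) * (ρ ^ (m+1) *
        (Real.sqrt π ^ (m+1) / Real.Gamma (((m+1:ℕ):ℝ) / 2 + 1)))) := by ring
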